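/- arXiv:1907.11155 — 6 statements merged into one kernel-verified Lean document; each statement's English description precedes it below -/
import Mathlib

section
/- For any ε > 0 and any real numbers x, y with 0 ≤ y ≤ 2/ε², the inequality (√(1+ε⁴x²) − 1)/ε³ + y/ε ≥ |x|·√(2y − ε²y²) holds. -/
theorem stmt_0 (ε : ℝ) (hε : 0 < ε) (x y : ℝ) (hy0 : 0 ≤ y) (hy2 : y ≤ 2 / ε ^ 2) :
    (Real.sqrt (1 + ε ^ 4 * x ^ 2) - 1) / ε ^ 3 + y / ε ≥
      |x| * Real.sqrt (2 * y - ε ^ 2 * y ^ 2) := by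
  have hε2 : (0:ℝ) < ε ^ 2 := by positivity
  have hy2' : y * ε ^ 2 ≤ 2 := by
    rw [← le_div_iff₀ hε2]; exact hy2
  have hyy : 0 ≤ 2 * y - ε ^ 2 * y ^ 2 := by nlinarith
  set s := Real.sqrt (1 + ε ^ 4 * x ^ 2) with hsdef
  set r := Real.sqrt (2 * y - ε ^ 2 * y ^ 2) with hrdef
  have hs1 : 1 ≤ s := by
    have h := Real.sqrt_le_sqrt (show (1:ℝ) ≤ 1 + ε ^ 4 * x ^ 2 from le_add_of_nonneg_right (by positivity))
    rwa [Real.sqrt_one] at h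
  have hs2 : s ^ 2 = 1 + ε ^ 4 * x ^ 2 := by
    rw [hsdef, Real.sq_sqrt (by positivity)]
  have hr0 : 0 ≤ r := Real.sqrt_nonneg _
  have hr2 : r ^ 2 = 2 * y - ε ^ 2 * y ^ 2 := by
    rw [hrdef, Real.sq_sqrt hyy]
  have hax : 0 ≤ |x| := abs_nonneg x
  have hax2 : |x| ^ 2 = x ^ 2 := sq_abs x
  have hprod : (ε ^ 3 * (|x| * r)) ^ 2 = ε ^ 6 * x ^ 2 * (2 * y - ε ^ 2 * y ^ 2) := by
    rw [mul_pow, mul_pow, hax2, hr2]; ring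
  have hident : (s - 1 + ε ^ 2 * y) ^ 2 - (ε ^ 3 * (|x| * r)) ^ 2
      = (s * (1 - ε ^ 2 * y) - 1) ^ 2 := by
    rw [hprod]
    linear_combination (2 * ε ^ 2 * y - ε ^ 4 * y ^ 2) * hs2
  have key : ε ^ 3 * (|x| * r) ≤ s - 1 + ε ^ 2 * y := by
    nlinarith [hident, sq_nonneg (s * (1 - ε ^ 2 * y) - 1),
      mul_nonneg (mul_nonneg (pow_nonneg hε.le 3) hax) hr0,
      mul_nonneg hε2.le hy0]
  have h3 : (0:ℝ) < ε ^ 3 := by positivity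
  rw [ge_iff_le, ← sub_nonneg]
  have heq : (s - 1) / ε ^ 3 + y / ε - |x| * r
      = (s - 1 + ε ^ 2 * y - ε ^ 3 * (|x| * r)) / ε ^ 3 := by
    field_simp
  rw [heq]
  exact div_nonneg (by linarith) h3.le
end

section
/- For any ε > 0 and any real numbers x, y with |x| ≤ 1/ε² and y ≥ 0, the inequality (1 − √(1−ε⁴x²))/ε³ + y/ε ≥ |x|·√(2y + ε²y²) holds. -/
theorem stmt_1 (ε : ℝ) (hε : 0 < ε) (x y : ℝ) (hx : |x| ≤ 1 / ε ^ 2) (hy : 0 ≤ y) :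
    (1 - Real.sqrt (1 - ε ^ 4 * x ^ 2)) / ε ^ 3 + y / ε ≥
      |x| * Real.sqrt (2 * y + ε ^ 2 * y ^ 2) := by
  have hε2 : (0:ℝ) < ε ^ 2 := pow_pos hε 2
  have hε3 : (0:ℝ) < ε ^ 3 := pow_pos hε 3
  have hx2 : ε ^ 4 * x ^ 2 ≤ 1 := by
    have h1 : |x| * ε ^ 2 ≤ 1 := by
      rw [div_eq_mul_inv, one_mul] at hx
      calc |x| * ε ^ 2 ≤ (ε ^ 2)⁻¹ * ε ^ 2 := by
            exact mul_le_mul_of_nonneg_right hx (le_of_lt hε2)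
        _ = 1 := inv_mul_cancel₀ (ne_of_gt hε2)
    have h2 : |x| * ε ^ 2 * (|x| * ε ^ 2) ≤ 1 := by
      nlinarith [abs_nonneg x, mul_nonneg (abs_nonneg x) (le_of_lt hε2)]
    have h3 : ε ^ 4 * x ^ 2 = |x| * ε ^ 2 * (|x| * ε ^ 2) := by
      rw [← sq_abs x]; ring
    linarith
  set a := Real.sqrt (1 - ε ^ 4 * x ^ 2) with ha
  set b := Real.sqrt (2 * y + ε ^ 2 * y ^ 2) with hb
  have ha2 : a ^ 2 = 1 - ε ^ 4 * x ^ 2 := Real.sq_sqrt (by linarith)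
  have hb2 : b ^ 2 = 2 * y + ε ^ 2 * y ^ 2 := Real.sq_sqrt (by positivity)
  have a0 : 0 ≤ a := Real.sqrt_nonneg _
  have b0 : 0 ≤ b := Real.sqrt_nonneg _
  have a1 : a ≤ 1 := by
    rw [ha]
    exact Real.sqrt_le_one.mpr (by nlinarith [sq_nonneg (ε ^ 2 * x)])
  have key : ε ^ 3 * (|x| * b) ≤ 1 - a + ε ^ 2 * y := by
    have hA : 0 ≤ 1 - a + ε ^ 2 * y := by nlinarith
    have hB : 0 ≤ ε ^ 3 * (|x| * b) := by positivity
    have hsq : (ε ^ 3 * (|x| * b)) ^ 2 ≤ (1 - a + ε ^ 2 * y) ^ 2 := by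
      have e1 : (ε ^ 3 * (|x| * b)) ^ 2 = ε ^ 6 * x ^ 2 * (2 * y + ε ^ 2 * y ^ 2) := by
        rw [mul_pow, mul_pow, hb2, sq_abs]; ring
      have id : (1 - a + ε ^ 2 * y) ^ 2 - ε ^ 6 * x ^ 2 * (2 * y + ε ^ 2 * y ^ 2)
          = (a * (1 + ε ^ 2 * y) - 1) ^ 2 := by
        linear_combination (1 - (1 + ε ^ 2 * y) ^ 2) * ha2
      nlinarith [sq_nonneg (a * (1 + ε ^ 2 * y) - 1)]
    nlinarith [hsq, hA, hB, sq_nonneg (1 - a + ε ^ 2 * y - ε ^ 3 * (|x| * b))]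
  rw [ge_iff_le]
  have h : |x| * b ≤ (1 - a + ε ^ 2 * y) / ε ^ 3 := by
    rw [le_div_iff₀ hε3]; nlinarith [key]
  calc |x| * b ≤ (1 - a + ε ^ 2 * y) / ε ^ 3 := h
    _ = (1 - a) / ε ^ 3 + y / ε := by field_simp
end

section
/- Let F be continuous and nonnegative with max_{s∈[−1,1]} F(s) ≤ 2ε⁻². If u ∈ H¹(c,d) with u(c) and u(d) given, then ∫_c^d [(√(1+ε⁴u'(x)²) − 1)/ε³ + F(u(x))/ε] dx ≥ |∫_{u(c)}^{u(d)} √(F(s)(2 − ε²F(s))) ds|. -/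
/-!
Pointwise, Cauchy–Schwarz applied to `(p, 1)` and `(√(q(2-q)), 1-q)`, a unit vector, gives
`p √(q(2-q)) ≤ √(1+p²) - 1 + q`; with `p = ε²|u'|` and `q = ε² F(u)` this bounds
`|u'| √(F(u)(2 - ε²F(u)))` by the energy density. Integrating and substituting `s = u(x)`
turns the left side into the integral of `√(F(s)(2 - ε²F(s)))` from `u c` to `u d`.
-/

open Real Set intervalIntegral

lemma mul_sqrt_mul_two_sub_le (p q : ℝ) (hq : 0 ≤ q * (2 - q)) :
    p * √(q * (2 - q)) ≤ √(1 + p ^ 2) - 1 + q := by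
  set r := √(q * (2 - q))
  have hr : r ^ 2 = q * (2 - q) := sq_sqrt hq
  have h : (p * r + (1 - q)) ^ 2 ≤ 1 + p ^ 2 := by
    nlinarith [sq_nonneg (p * (1 - q) - r)]
  linarith [le_abs_self (p * r + (1 - q)), abs_le_sqrt h]

lemma abs_mul_sqrt_le_saturating_density (ε x y : ℝ) (hε : 0 < ε)
    (hy : 0 ≤ y * (2 - ε ^ 2 * y)) :
    |x| * √(y * (2 - ε ^ 2 * y)) ≤ (√(1 + ε ^ 4 * x ^ 2) - 1) / ε ^ 3 + y / ε := by
  have hq : 0 ≤ ε ^ 2 * y * (2 - ε ^ 2 * y) := by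
    rw [mul_assoc]; positivity
  have hsqrt : √(ε ^ 2 * y * (2 - ε ^ 2 * y)) = ε * √(y * (2 - ε ^ 2 * y)) := by
    rw [mul_assoc, sqrt_mul (sq_nonneg ε), sqrt_sq hε.le]
  have key := mul_sqrt_mul_two_sub_le (ε ^ 2 * |x|) (ε ^ 2 * y) hq
  rw [hsqrt, mul_pow, sq_abs, ← pow_mul] at key
  rw [div_add_div _ _ (by positivity) hε.ne', le_div_iff₀ (by positivity)]
  nlinarith [key]

lemma abs_integral_comp_le_of_abs_deriv_mul_le {c d : ℝ} (hcd : c ≤ d) {u u' g L : ℝ → ℝ}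
    (hu : ∀ x ∈ Icc c d, HasDerivAt u (u' x) x) (hu' : ContinuousOn u' (Icc c d))
    (hg : Continuous g) (hL : IntervalIntegrable L MeasureTheory.volume c d)
    (hbound : ∀ x ∈ Icc c d, |u' x * g (u x)| ≤ L x) :
    |∫ s in u c..u d, g s| ≤ ∫ x in c..d, L x := by
  rw [← uIcc_of_le hcd] at hu hu'
  have hucont : ContinuousOn u (uIcc c d) := fun x hx =>
    (hu x hx).continuousAt.continuousWithinAt
  have hint : IntervalIntegrable (fun x => u' x * g (u x)) MeasureTheory.volume c d :=
    (hu'.mul (hg.comp_continuousOn hucont)).intervalIntegrable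
  rw [← integral_deriv_smul_comp hu hu' hg]
  calc |∫ x in c..d, u' x * g (u x)|
      ≤ ∫ x in c..d, |u' x * g (u x)| := abs_integral_le_integral_abs hcd
    _ ≤ ∫ x in c..d, L x := integral_mono_on hcd hint.abs hL hbound

theorem stmt_8_general (ε c d : ℝ) (hε : 0 < ε) (hcd : c < d) (F : ℝ → ℝ)
    (hF : Continuous F) (hFnn : ∀ s, 0 ≤ F s)
    (u u' : ℝ → ℝ)
    (hu : ∀ x ∈ Set.Icc c d, HasDerivAt u (u' x) x)
    (hu' : ContinuousOn u' (Set.Icc c d))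
    (hval : ∀ x ∈ Set.Icc c d, 0 ≤ 2 - ε ^ 2 * F (u x)) :
    (∫ x in c..d, ((Real.sqrt (1 + ε ^ 4 * u' x ^ 2) - 1) / ε ^ 3 + F (u x) / ε)) ≥
      |∫ s in (u c)..(u d), Real.sqrt (F s * (2 - ε ^ 2 * F s))| := by
  have hucont : ContinuousOn u (Icc c d) := fun x hx =>
    (hu x hx).continuousAt.continuousWithinAt
  have hdensity : ContinuousOn
      (fun x => (√(1 + ε ^ 4 * u' x ^ 2) - 1) / ε ^ 3 + F (u x) / ε) (Icc c d) := by
    fun_prop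
  refine abs_integral_comp_le_of_abs_deriv_mul_le hcd.le hu hu' (by fun_prop)
    (hdensity.intervalIntegrable_of_Icc hcd.le) fun x hx => ?_
  rw [abs_mul, abs_of_nonneg (sqrt_nonneg _)]
  exact abs_mul_sqrt_le_saturating_density ε (u' x) (F (u x)) hε
    (mul_nonneg (hFnn _) (hval x hx))

theorem stmt_8 (ε c d : ℝ) (hε : 0 < ε) (hcd : c < d) (F : ℝ → ℝ)
    (hF : Continuous F) (hFnn : ∀ s, 0 ≤ F s)
    (hFmax : ∀ s ∈ Set.Icc (-1 : ℝ) 1, F s ≤ 2 / ε ^ 2)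
    (u u' : ℝ → ℝ)
    (hu : ∀ x ∈ Set.Icc c d, HasDerivAt u (u' x) x)
    (hu' : ContinuousOn u' (Set.Icc c d))
    (hval : ∀ x ∈ Set.Icc c d, 0 ≤ 2 - ε ^ 2 * F (u x)) :
    (∫ x in c..d, ((Real.sqrt (1 + ε ^ 4 * u' x ^ 2) - 1) / ε ^ 3 + F (u x) / ε)) ≥
      |∫ s in (u c)..(u d), Real.sqrt (F s * (2 - ε ^ 2 * F s))| :=
  stmt_8_general ε c d hε hcd F hF hFnn u u' hu hu' hval
end

section
/- Let F be continuous and nonnegative. If u ∈ H¹(c,d) satisfies ε²|u'(x)| ≤ 1 a.e., then ∫_c^d [(1 − √(1−ε⁴u'(x)²))/ε³ + F(u(x))/ε] dx ≥ |∫_{u(c)}^{u(d)} √(F(s)(2 + ε²F(s))) ds|. -/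
lemma ptwise (ε p F0 : ℝ) (hε : 0 < ε) (hp : ε ^ 2 * |p| ≤ 1) (hF : 0 ≤ F0) :
    |p| * Real.sqrt (F0 * (2 + ε ^ 2 * F0)) ≤
      (1 - Real.sqrt (1 - ε ^ 4 * p ^ 2)) / ε ^ 3 + F0 / ε := by
  have hε2 : (0:ℝ) < ε ^ 2 := by positivity
  have h0 : 0 ≤ ε ^ 2 * |p| := by positivity
  have h1 : ε ^ 4 * p ^ 2 ≤ 1 := by
    have h2 := mul_le_mul hp hp h0 zero_le_one
    have h3 : (ε ^ 2 * |p|) * (ε ^ 2 * |p|) = ε ^ 4 * p ^ 2 := by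
      rw [← sq_abs p]; ring
    linarith [h3 ▸ h2]
  set A := Real.sqrt (1 - ε ^ 4 * p ^ 2) with hA
  have hA0 : 0 ≤ A := Real.sqrt_nonneg _
  have hA2 : A ^ 2 = 1 - ε ^ 4 * p ^ 2 := Real.sq_sqrt (by linarith)
  set b := ε ^ 2 * F0 with hb
  have hb0 : 0 ≤ b := by positivity
  have hεS : ε * Real.sqrt (F0 * (2 + ε ^ 2 * F0)) = Real.sqrt (b * (2 + b)) := by
    have e1 : b * (2 + b) = ε ^ 2 * (F0 * (2 + ε ^ 2 * F0)) := by rw [hb]; ring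
    rw [e1, Real.sqrt_mul (by positivity : (0:ℝ) ≤ ε ^ 2) (F0 * (2 + ε ^ 2 * F0)),
      Real.sqrt_sq hε.le]
  set B := Real.sqrt (b * (2 + b)) with hBdef
  have hB0 : 0 ≤ B := Real.sqrt_nonneg _
  have hB2 : B ^ 2 = b * (2 + b) := Real.sq_sqrt (by positivity)
  have ha : (ε ^ 2 * |p|) ^ 2 = 1 - A ^ 2 := by
    rw [hA2]; rw [mul_pow, sq_abs]; ring
  have key : (ε ^ 2 * |p|) * B ≤ 1 + b - A := by
    nlinarith [sq_nonneg (A * (1 + b) - 1), sq_nonneg (ε ^ 2 * |p| * B - (1 + b - A)),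
      mul_nonneg (mul_nonneg hε2.le (abs_nonneg p)) hB0, sq_nonneg (A - 1)]
  have hfinal : ε ^ 3 * (|p| * Real.sqrt (F0 * (2 + ε ^ 2 * F0))) ≤ 1 - A + b := by
    have : ε ^ 3 * (|p| * Real.sqrt (F0 * (2 + ε ^ 2 * F0)))
        = (ε ^ 2 * |p|) * (ε * Real.sqrt (F0 * (2 + ε ^ 2 * F0))) := by ring
    rw [this, hεS]
    linarith [key]
  have hε3 : (0:ℝ) < ε ^ 3 := by positivity
  have e2 : (1 - A) / ε ^ 3 + F0 / ε = (1 - A + b) / ε ^ 3 := by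
    rw [hb]; field_simp
  rw [e2, le_div_iff₀ hε3]
  nlinarith [hfinal]

theorem stmt_9 (ε c d : ℝ) (hε : 0 < ε) (hcd : c < d) (F : ℝ → ℝ)
    (hF : Continuous F) (hFnn : ∀ s, 0 ≤ F s)
    (u u' : ℝ → ℝ)
    (hu : ∀ x ∈ Set.Icc c d, HasDerivAt u (u' x) x)
    (hu' : ContinuousOn u' (Set.Icc c d))
    (hgrad : ∀ᵐ x ∂MeasureTheory.volume, x ∈ Set.Icc c d → ε ^ 2 * |u' x| ≤ 1) :
    (∫ x in c..d, ((1 - Real.sqrt (1 - ε ^ 4 * u' x ^ 2)) / ε ^ 3 + F (u x) / ε)) ≥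
      |∫ s in (u c)..(u d), Real.sqrt (F s * (2 + ε ^ 2 * F s))| := by
  set g : ℝ → ℝ := fun s => Real.sqrt (F s * (2 + ε ^ 2 * F s)) with hg
  have hgc : Continuous g := (hF.mul (by continuity)).sqrt
  have huIcc : Set.uIcc c d = Set.Icc c d := Set.uIcc_of_le hcd.le
  have hucont : ContinuousOn u (Set.Icc c d) := fun x hx =>
    (hu x hx).continuousAt.continuousWithinAt
  have hchg : (∫ s in (u c)..(u d), g s) = ∫ x in c..d, u' x * g (u x) := by
    rw [← intervalIntegral.integral_comp_smul_deriv (by rw [huIcc]; exact hu)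
      (by rw [huIcc]; exact hu') hgc]
    simp [smul_eq_mul]
  have hint1 : IntervalIntegrable (fun x => |u' x| * g (u x)) MeasureTheory.volume c d := by
    apply ContinuousOn.intervalIntegrable
    rw [huIcc]
    exact (hu'.abs).mul (hgc.comp_continuousOn hucont)
  have hint2 : IntervalIntegrable
      (fun x => (1 - Real.sqrt (1 - ε ^ 4 * u' x ^ 2)) / ε ^ 3 + F (u x) / ε)
      MeasureTheory.volume c d := by
    apply ContinuousOn.intervalIntegrable
    rw [huIcc]
    apply ContinuousOn.add
    · exact (((continuousOn_const.sub ((continuousOn_const.sub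
        (continuousOn_const.mul (hu'.pow 2))).sqrt))).div_const _)
    · exact ((hF.comp_continuousOn hucont).div_const _)
  have hae : ∀ᵐ x ∂(MeasureTheory.volume.restrict (Set.Icc c d)),
      |u' x| * g (u x) ≤ (1 - Real.sqrt (1 - ε ^ 4 * u' x ^ 2)) / ε ^ 3 + F (u x) / ε := by
    rw [MeasureTheory.ae_restrict_iff' measurableSet_Icc]
    filter_upwards [hgrad] with x hx hxI
    exact ptwise ε (u' x) (F (u x)) hε (hx hxI) (hFnn _)
  calc |∫ s in (u c)..(u d), g s| = |∫ x in c..d, u' x * g (u x)| := by rw [hchg]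
    _ ≤ ∫ x in c..d, |u' x * g (u x)| :=
        intervalIntegral.abs_integral_le_integral_abs hcd.le
    _ = ∫ x in c..d, |u' x| * g (u x) := by
        apply intervalIntegral.integral_congr
        intro x _
        show |u' x * g (u x)| = |u' x| * g (u x)
        rw [abs_mul, abs_of_nonneg (Real.sqrt_nonneg _)]
    _ ≤ ∫ x in c..d, ((1 - Real.sqrt (1 - ε ^ 4 * u' x ^ 2)) / ε ^ 3 + F (u x) / ε) :=
        intervalIntegral.integral_mono_ae_restrict hcd.le hint1 hint2 hae
end

section
/- Suppose ε > 0, A > 0, μ > 0, and ψ : [α,β] → ℝ is C² and satisfies ψ ≥ 0, ψ''(x) − (μ²/ε²)ψ(x) ≥ 0 on (α,β), ψ(α) = ψ₀ ≥ 0 and ψ'(β) = 0. Then ψ(β) ≤ ψ₀ / cosh(μ(β−α)/ε), and in particular ψ(β) ≤ 2 ψ₀ e^{−μ(β−α)/ε}. -/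
theorem stmt_10 (ε A μ α β ψ₀ : ℝ) (hε : 0 < ε) (hA : 0 < A) (hμ : 0 < μ)
    (hαβ : α < β) (ψ ψ' ψ'' : ℝ → ℝ)
    (hψ : ∀ x ∈ Set.Icc α β, HasDerivAt ψ (ψ' x) x)
    (hψ' : ∀ x ∈ Set.Icc α β, HasDerivAt ψ' (ψ'' x) x)
    (hψ''cont : ContinuousOn ψ'' (Set.Icc α β))
    (hψnn : ∀ x ∈ Set.Icc α β, 0 ≤ ψ x)
    (hineq : ∀ x ∈ Set.Ioo α β, 0 ≤ ψ'' x - (μ ^ 2 / ε ^ 2) * ψ x)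
    (hψα : ψ α = ψ₀) (hψ₀ : 0 ≤ ψ₀) (hψ'β : ψ' β = 0) :
    ψ β ≤ ψ₀ / Real.cosh (μ * (β - α) / ε) ∧
      ψ β ≤ 2 * ψ₀ * Real.exp (-(μ * (β - α) / ε)) := by
  have hc : 0 < μ / ε := div_pos hμ hε
  set c : ℝ := μ / ε with hcdef
  have hβmem : β ∈ Set.Icc α β := ⟨hαβ.le, le_refl β⟩
  have hlin : ∀ x : ℝ, HasDerivAt (fun x => c * (x - β)) c x := by
    intro x
    simpa using ((hasDerivAt_id x).sub_const β).const_mul c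
  have hcoshd : ∀ x : ℝ, HasDerivAt (fun x => Real.cosh (c * (x - β)))
      (Real.sinh (c * (x - β)) * c) x := fun x =>
    (Real.hasDerivAt_cosh _).comp x (hlin x)
  have hsinhd : ∀ x : ℝ, HasDerivAt (fun x => Real.sinh (c * (x - β)))
      (Real.cosh (c * (x - β)) * c) x := fun x =>
    (Real.hasDerivAt_sinh _).comp x (hlin x)
  -- v x = ψ' x * cosh(c(x-β)) - c * ψ x * sinh(c(x-β))
  set v : ℝ → ℝ := fun x => ψ' x * Real.cosh (c * (x - β)) - c * ψ x * Real.sinh (c * (x - β))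
    with hvdef
  have hvderiv : ∀ x ∈ Set.Icc α β,
      HasDerivAt v ((ψ'' x - c ^ 2 * ψ x) * Real.cosh (c * (x - β))) x := by
    intro x hx
    have h1 := (hψ' x hx).mul (hcoshd x)
    have h2 := (((hψ x hx).const_mul c).mul (hsinhd x))
    have := h1.sub h2
    convert this using 1
    case e'_5 => rfl
    case e'_4 => rfl
    case e'_8 => rfl
    ring
  have hψcont : ContinuousOn ψ (Set.Icc α β) := fun x hx =>
    (hψ x hx).continuousAt.continuousWithinAt
  have hψ'cont : ContinuousOn ψ' (Set.Icc α β) := fun x hx =>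
    (hψ' x hx).continuousAt.continuousWithinAt
  have hcoshc : Continuous fun x : ℝ => Real.cosh (c * (x - β)) := by fun_prop
  have hsinhc : Continuous fun x : ℝ => Real.sinh (c * (x - β)) := by fun_prop
  have hvcont : ContinuousOn v (Set.Icc α β) :=
    (hψ'cont.mul hcoshc.continuousOn).sub
      ((continuousOn_const.mul hψcont).mul hsinhc.continuousOn)
  have hint : interior (Set.Icc α β) = Set.Ioo α β := interior_Icc
  have hvmono : MonotoneOn v (Set.Icc α β) := by
    apply monotoneOn_of_deriv_nonneg (convex_Icc α β) hvcont
    · intro x hx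
      rw [hint] at hx
      exact (hvderiv x (Set.Ioo_subset_Icc_self hx)).differentiableAt.differentiableWithinAt
    · intro x hx
      rw [hint] at hx
      rw [(hvderiv x (Set.Ioo_subset_Icc_self hx)).deriv]
      have h1 := hineq x hx
      have h2 : (0:ℝ) < Real.cosh (c * (x - β)) := Real.cosh_pos _
      have h3 : μ ^ 2 / ε ^ 2 = c ^ 2 := by
        rw [hcdef]; rw [div_pow]
      rw [h3] at h1
      exact mul_nonneg h1 h2.le
  have hvβ : v β = 0 := by
    simp [hvdef, hψ'β]
  have hvle : ∀ x ∈ Set.Icc α β, v x ≤ 0 := by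
    intro x hx
    calc v x ≤ v β := hvmono hx hβmem hx.2
    _ = 0 := hvβ
  -- g x = ψ x / cosh(c(x-β))
  set g : ℝ → ℝ := fun x => ψ x / Real.cosh (c * (x - β)) with hgdef
  have hgderiv : ∀ x ∈ Set.Icc α β,
      HasDerivAt g ((ψ' x * Real.cosh (c * (x - β)) - ψ x * (Real.sinh (c * (x - β)) * c)) /
        Real.cosh (c * (x - β)) ^ 2) x := by
    intro x hx
    exact (hψ x hx).div (hcoshd x) (ne_of_gt (Real.cosh_pos _))
  have hgcont : ContinuousOn g (Set.Icc α β) :=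
    hψcont.div hcoshc.continuousOn (fun x _ => ne_of_gt (Real.cosh_pos _))
  have hganti : AntitoneOn g (Set.Icc α β) := by
    apply antitoneOn_of_deriv_nonpos (convex_Icc α β) hgcont
    · intro x hx
      rw [hint] at hx
      exact (hgderiv x (Set.Ioo_subset_Icc_self hx)).differentiableAt.differentiableWithinAt
    · intro x hx
      rw [hint] at hx
      rw [(hgderiv x (Set.Ioo_subset_Icc_self hx)).deriv]
      apply div_nonpos_of_nonpos_of_nonneg
      · have := hvle x (Set.Ioo_subset_Icc_self hx)
        rw [hvdef] at this
        simp only at this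
        nlinarith
      · positivity
  have hαmem : α ∈ Set.Icc α β := ⟨le_refl α, hαβ.le⟩
  have hgβα : g β ≤ g α := hganti hαmem hβmem hαβ.le
  have hct : c * (β - α) = μ * (β - α) / ε := by
    rw [hcdef]; ring
  have hgβ : g β = ψ β := by simp [hgdef]
  have hgα : g α = ψ₀ / Real.cosh (μ * (β - α) / ε) := by
    rw [hgdef]
    simp only
    rw [hψα, ← hct]
    have : c * (α - β) = -(c * (β - α)) := by ring
    rw [this, Real.cosh_neg]
  have hmain : ψ β ≤ ψ₀ / Real.cosh (μ * (β - α) / ε) := by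
    rw [← hgβ, ← hgα]; exact hgβα
  refine ⟨hmain, hmain.trans ?_⟩
  set t : ℝ := μ * (β - α) / ε with htdef
  rw [div_le_iff₀ (Real.cosh_pos _)]
  rw [Real.cosh_eq]
  have h1 : Real.exp (-t) * Real.exp t = 1 := by
    rw [← Real.exp_add]; simp
  nlinarith [mul_nonneg hψ₀ (sq_nonneg (Real.exp (-t))), Real.exp_pos t, Real.exp_pos (-t)]
end

section
/- Let ε > 0 and suppose Φ : ℝ → (−1,1) is differentiable and satisfies the first-order ODE εΦ'(x) = √(F(Φ(x))(2 − ε²F(Φ(x))))/(1 − ε²F(Φ(x))) with 1 − ε²F(Φ(x)) > 0 everywhere. Then for any a < b, ∫_a^b [(√(1+ε⁴Φ'(x)²) − 1)/ε³ + F(Φ(x))/ε] dx = ∫_{Φ(a)}^{Φ(b)} √(F(s)(2 − ε²F(s))) ds. -/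
theorem stmt_15 (ε : ℝ) (hε : 0 < ε) (F : ℝ → ℝ) (hF : Continuous F)
    (hFnn : ∀ s, 0 ≤ F s) (Φ Φ' : ℝ → ℝ)
    (hΦ : ∀ x, HasDerivAt Φ (Φ' x) x) (hΦ'cont : Continuous Φ')
    (hpos : ∀ x, 0 < 1 - ε ^ 2 * F (Φ x))
    (hODE : ∀ x, ε * Φ' x =
      Real.sqrt (F (Φ x) * (2 - ε ^ 2 * F (Φ x))) / (1 - ε ^ 2 * F (Φ x)))
    (a b : ℝ) (hab : a < b) :
    (∫ x in a..b, ((Real.sqrt (1 + ε ^ 4 * Φ' x ^ 2) - 1) / ε ^ 3 + F (Φ x) / ε)) =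
      ∫ s in (Φ a)..(Φ b), Real.sqrt (F s * (2 - ε ^ 2 * F s)) := by
  have hg : Continuous fun s => Real.sqrt (F s * (2 - ε ^ 2 * F s)) := by
    apply Real.continuous_sqrt.comp
    continuity
  rw [← intervalIntegral.integral_comp_smul_deriv
      (fun x _ => hΦ x) hΦ'cont.continuousOn hg]
  apply intervalIntegral.integral_congr
  intro x _
  simp only [Function.comp_apply, smul_eq_mul]
  set f := F (Φ x) with hf
  have hfnn : 0 ≤ f := hFnn _
  have hD : 0 < 1 - ε ^ 2 * f := hpos x
  have h2 : 0 ≤ 2 - ε ^ 2 * f := by nlinarith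
  have hS : 0 ≤ Real.sqrt (f * (2 - ε ^ 2 * f)) := Real.sqrt_nonneg _
  have hSsq : Real.sqrt (f * (2 - ε ^ 2 * f)) ^ 2 = f * (2 - ε ^ 2 * f) :=
    Real.sq_sqrt (mul_nonneg hfnn h2)
  have hode := hODE x
  have hΦ'x : Φ' x = Real.sqrt (f * (2 - ε ^ 2 * f)) / (ε * (1 - ε ^ 2 * f)) := by
    field_simp at hode ⊢
    rw [← hf] at hode
    rw [hode, div_mul_cancel₀ _ hD.ne']
  rw [hΦ'x]
  set S := Real.sqrt (f * (2 - ε ^ 2 * f)) with hSdef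
  clear_value S
  have hsqrt : Real.sqrt (1 + ε ^ 4 * (S / (ε * (1 - ε ^ 2 * f))) ^ 2)
      = 1 / (1 - ε ^ 2 * f) := by
    have : 1 + ε ^ 4 * (S / (ε * (1 - ε ^ 2 * f))) ^ 2 = (1 / (1 - ε ^ 2 * f)) ^ 2 := by
      field_simp
      linear_combination (ε ^ 2) * hSsq
    rw [this, Real.sqrt_sq (by positivity)]
  rw [hsqrt]
  field_simp
  linear_combination (-(ε ^ 2)) * hSsq
end
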